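/- arXiv:2305.06793 — 3 statements merged into one kernel-verified Lean document; each statement's English description precedes it below -/
import Mathlib

section
/- Let 0 < p < 1/2, p̄ = 1 - p, Q(y | w) = p̄ if y = w else p, and q(w | n) the posterior weights with ratio (p̄/p)^n. Let η : ℤ → [0,1] be finitely supported with Σₙ η(n) = 1, and suppose p/p̄ ≤ (Σₙ η(n) q(1|n)) / (Σₙ η(n) q(-1|n)) ≤ p̄/p. Then for every y ∈ {-1, 1}: Σ_{w ∈ {-1,1}} Σₙ Q(y | w) η(n) q(w | n) · ([w = y] - [w = -y]) ≥ 0, where [·] denotes the indicator (1 if true, 0 otherwise). -/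
/-! With `A = ∑ η n q(1|n)` and `B = ∑ η n q(-1|n)`, the gain from reporting `y` truthfully is
`(1 - p) A - p B` for `y = 1` and `(1 - p) B - p A` for `y = -1`. Both are nonnegative exactly
when the likelihood ratio `A / B` lies in `[p / (1 - p), (1 - p) / p]`. -/

lemma sum_pair_mul_indicator_sub (g : ℤ → ℝ) {y : ℤ} (hy : y = 1 ∨ y = -1) :
    ∑ w ∈ ({-1, 1} : Finset ℤ),
        g w * ((if w = y then (1:ℝ) else 0) - (if w = -y then (1:ℝ) else 0)) = g y - g (-y) := by
  rcases hy with rfl | rfl <;> norm_num [Finset.sum_pair] <;> ring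

lemma mul_le_mul_of_ratio_between {p A B : ℝ} (hp : 0 < p) (hp1 : p < 1) (hB : 0 ≤ B)
    (h₁ : p / (1 - p) ≤ A / B) (h₂ : A / B ≤ (1 - p) / p) :
    p * B ≤ (1 - p) * A ∧ p * A ≤ (1 - p) * B := by
  have hp1' : 0 < 1 - p := sub_pos.mpr hp1
  -- `A / 0 = 0` would force `p / (1 - p) ≤ 0`.
  have hB' : 0 < B := by
    refine hB.lt_of_ne fun h => ?_
    rw [← h, div_zero] at h₁
    exact (div_pos hp hp1').not_ge h₁
  constructor
  · rw [div_le_div_iff₀ hp1' hB'] at h₁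
    linarith
  · rw [div_le_div_iff₀ hB' hp] at h₂
    linarith

theorem truth_telling_learning_set_general (p : ℝ) (hp : 0 < p) (hp' : p < 1/2)
    (Q : ℤ → ℤ → ℝ) (hQ : ∀ y w, Q y w = if y = w then (1 - p) else p)
    (q : ℤ → ℤ → ℝ)
    (hq2 : ∀ n : ℤ, q (-1) n = 1 / (((1 - p)/p) ^ n + 1))
    (η : ℤ →₀ ℝ) (hη0 : ∀ n, 0 ≤ η n)
    (hL1 : p/(1 - p) ≤ (∑ n ∈ η.support, η n * q 1 n) / (∑ n ∈ η.support, η n * q (-1) n))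
    (hL2 : (∑ n ∈ η.support, η n * q 1 n) / (∑ n ∈ η.support, η n * q (-1) n) ≤ (1 - p)/p)
    (y : ℤ) (hy : y = 1 ∨ y = -1) :
    0 ≤ ∑ w ∈ ({-1, 1} : Finset ℤ), ∑ n ∈ η.support,
        Q y w * η n * q w n *
          ((if w = y then (1:ℝ) else 0) - (if w = -y then (1:ℝ) else 0)) := by
  have hB : 0 ≤ ∑ n ∈ η.support, η n * q (-1) n := by
    refine Finset.sum_nonneg fun n _ => mul_nonneg (hη0 n) ?_
    rw [hq2]
    have := zpow_pos (div_pos (by linarith : (0:ℝ) < 1 - p) hp) n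
    positivity
  obtain ⟨h₁, h₂⟩ := mul_le_mul_of_ratio_between hp (by linarith) hB hL1 hL2
  simp_rw [← Finset.sum_mul, mul_assoc (Q y _), ← Finset.mul_sum]
  rw [sum_pair_mul_indicator_sub (fun w => Q y w * ∑ n ∈ η.support, η n * q w n) hy]
  rcases hy with rfl | rfl <;> norm_num [hQ] <;> linarith

/-- Truth-telling constraint under the revealing strategy: if the public belief `η` lies in
the learning set, the expected gain of truthfully reporting `y` versus misreporting `-y`
is nonnegative. -/
theorem truth_telling_learning_set (p : ℝ) (hp : 0 < p) (hp' : p < 1/2)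
    (Q : ℤ → ℤ → ℝ) (hQ : ∀ y w, Q y w = if y = w then (1 - p) else p)
    (q : ℤ → ℤ → ℝ)
    (hq1 : ∀ n : ℤ, q 1 n = ((1 - p)/p) ^ n / (((1 - p)/p) ^ n + 1))
    (hq2 : ∀ n : ℤ, q (-1) n = 1 / (((1 - p)/p) ^ n + 1))
    (η : ℤ →₀ ℝ) (hη0 : ∀ n, 0 ≤ η n) (hη1 : ∀ n, η n ≤ 1)
    (hηsum : ∑ n ∈ η.support, η n = 1)
    (hL1 : p/(1 - p) ≤ (∑ n ∈ η.support, η n * q 1 n) / (∑ n ∈ η.support, η n * q (-1) n))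
    (hL2 : (∑ n ∈ η.support, η n * q 1 n) / (∑ n ∈ η.support, η n * q (-1) n) ≤ (1 - p)/p)
    (y : ℤ) (hy : y = 1 ∨ y = -1) :
    0 ≤ ∑ w ∈ ({-1, 1} : Finset ℤ), ∑ n ∈ η.support,
        Q y w * η n * q w n *
          ((if w = y then (1:ℝ) else 0) - (if w = -y then (1:ℝ) else 0)) :=
  truth_telling_learning_set_general p hp hp' Q hQ q hq2 η hη0 hL1 hL2 y hy
end

section
/- Let 0 < p < 1/2, p̄ = 1 - p, Q(y|w) = p̄ if y = w else p, and q(w|n) the posterior weights with q(1|n)/q(-1|n) = (p̄/p)^n and q(1|n)+q(-1|n)=1. Define the NSII partial strategy θ(· | n, m) = 1_{sign(n+m)} if n + m ≠ 0 and θ(· | n, m) = 1_{sign(n)} if n + m = 0 (for m ∈ {-1,1}). Then for any finitely supported probability η : ℤ → [0,1] and any y ∈ {-1,1}: Σ_{w ∈ {-1,1}} Σₙ Q(y|w) η(n) q(w|n) · (θ(w | n, y) - θ(w | n, -y)) = (1/2) · η(0) · (p̄ - p), which is nonnegative. -/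
/-!
Away from `n = 0` a single report `m = ±1` cannot move `n + m` across zero (a tie falls back on
`sign n`), so the recommendations for the reports `y` and `-y` agree. At `n = 0` the report is
followed, and the posterior there is uniform, `q(±1 | 0) = 1/2`; so only the term `n = 0`
survives, contributing `½ η(0) (Q(y|y) - Q(y|-y)) = ½ η(0) (p̄ - p)`.
-/

theorem Int.sign_add_eq_sign_of_abs_le_one {n m : ℤ} (hn : n ≠ 0) (hm : |m| ≤ 1)
    (hnm : n + m ≠ 0) : (n + m).sign = n.sign := by
  obtain ⟨hm₁, hm₂⟩ := abs_le.mp hm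
  rcases hn.lt_or_gt with hneg | hpos
  · rw [Int.sign_eq_neg_one_of_neg hneg, Int.sign_eq_neg_one_of_neg (by omega)]
  · rw [Int.sign_eq_one_of_pos hpos, Int.sign_eq_one_of_pos (by omega)]

/-- The NSII recommendation `θ(w | n, m)`. -/
def nsiiRec (w n m : ℤ) : ℝ :=
  if n + m ≠ 0 then (if w = Int.sign (n + m) then 1 else 0)
  else (if w = Int.sign n then 1 else 0)

theorem nsiiRec_of_ne_zero {n m : ℤ} (w : ℤ) (hn : n ≠ 0) (hm : |m| ≤ 1) :
    nsiiRec w n m = if w = n.sign then 1 else 0 := by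
  by_cases hnm : n + m = 0
  · rw [nsiiRec, if_neg (not_not.mpr hnm)]
  · rw [nsiiRec, if_pos hnm, Int.sign_add_eq_sign_of_abs_le_one hn hm hnm]

theorem nsiiRec_neg_of_ne_zero {n m : ℤ} (w : ℤ) (hn : n ≠ 0) (hm : |m| ≤ 1) :
    nsiiRec w n (-m) = nsiiRec w n m := by
  rw [nsiiRec_of_ne_zero w hn hm, nsiiRec_of_ne_zero w hn (by rwa [abs_neg])]

theorem nsiiRec_zero (w m : ℤ) : nsiiRec w 0 m = if w = m.sign then 1 else 0 := by
  by_cases hm : m = 0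
  · rw [nsiiRec, if_neg (by simpa using hm), hm]
  · rw [nsiiRec, if_pos (by rwa [zero_add]), zero_add]

theorem nsii_truth_telling_margin_general (p : ℝ) (hp' : p < 1/2)
    (Q : ℤ → ℤ → ℝ) (hQ : ∀ y w, Q y w = if y = w then (1 - p) else p)
    (q : ℤ → ℤ → ℝ)
    (hq1 : ∀ n : ℤ, q 1 n = ((1 - p)/p) ^ n / (((1 - p)/p) ^ n + 1))
    (hq2 : ∀ n : ℤ, q (-1) n = 1 / (((1 - p)/p) ^ n + 1))
    (θ : ℤ → ℤ → ℤ → ℝ)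
    (hθ : ∀ w n m, θ w n m =
      if n + m ≠ 0 then (if w = Int.sign (n + m) then 1 else 0)
      else (if w = Int.sign n then 1 else 0))
    (η : ℤ →₀ ℝ) (hη0 : ∀ n, 0 ≤ η n)
    (y : ℤ) (hy : y = 1 ∨ y = -1) :
    (∑ w ∈ ({-1, 1} : Finset ℤ), ∑ n ∈ η.support,
        Q y w * η n * q w n * (θ w n y - θ w n (-y)))
      = (1/2) * η 0 * ((1 - p) - p) ∧
    0 ≤ (1/2) * η 0 * ((1 - p) - p) := by
  obtain rfl : θ = nsiiRec := funext fun w => funext fun n => funext fun m => hθ w n m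
  have hy_abs : |y| ≤ 1 := by rcases hy with rfl | rfl <;> norm_num
  have hq_zero : q 1 0 = 1/2 ∧ q (-1) 0 = 1/2 := by
    rw [hq1, hq2]; norm_num
  have sum_eq_term_zero (w : ℤ) : ∑ n ∈ η.support, Q y w * η n * q w n * (nsiiRec w n y - nsiiRec w n (-y))
      = Q y w * η 0 * q w 0 * (nsiiRec w 0 y - nsiiRec w 0 (-y)) := by
    refine Finset.sum_eq_single 0 (fun n _ hn => ?_) (fun h0 => ?_)
    · rw [nsiiRec_neg_of_ne_zero w hn hy_abs, sub_self, mul_zero]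
    · rw [Finsupp.notMem_support_iff.mp h0]; ring
  refine ⟨?_, mul_nonneg (mul_nonneg (by norm_num) (hη0 0)) (by linarith)⟩
  rw [Finset.sum_pair (by norm_num), sum_eq_term_zero, sum_eq_term_zero, hQ, hQ, hq_zero.1, hq_zero.2,
    nsiiRec_zero, nsiiRec_zero, nsiiRec_zero, nsiiRec_zero]
  rcases hy with rfl | rfl <;> norm_num <;> ring

/-- Truth-telling margin of the NSII partial strategy equals `½ η(0)(p̄ - p) ≥ 0`. -/
theorem nsii_truth_telling_margin (p : ℝ) (hp : 0 < p) (hp' : p < 1/2)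
    (Q : ℤ → ℤ → ℝ) (hQ : ∀ y w, Q y w = if y = w then (1 - p) else p)
    (q : ℤ → ℤ → ℝ)
    (hq1 : ∀ n : ℤ, q 1 n = ((1 - p)/p) ^ n / (((1 - p)/p) ^ n + 1))
    (hq2 : ∀ n : ℤ, q (-1) n = 1 / (((1 - p)/p) ^ n + 1))
    (θ : ℤ → ℤ → ℤ → ℝ)
    (hθ : ∀ w n m, θ w n m =
      if n + m ≠ 0 then (if w = Int.sign (n + m) then 1 else 0)
      else (if w = Int.sign n then 1 else 0))
    (η : ℤ →₀ ℝ) (hη0 : ∀ n, 0 ≤ η n) (hη1 : ∀ n, η n ≤ 1)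
    (hηsum : ∑ n ∈ η.support, η n = 1)
    (y : ℤ) (hy : y = 1 ∨ y = -1) :
    (∑ w ∈ ({-1, 1} : Finset ℤ), ∑ n ∈ η.support,
        Q y w * η n * q w n * (θ w n y - θ w n (-y)))
      = (1/2) * η 0 * ((1 - p) - p) ∧
    0 ≤ (1/2) * η 0 * ((1 - p) - p) :=
  nsii_truth_telling_margin_general p hp' Q hQ q hq1 hq2 θ hθ η hη0 y hy
end

section
/- Let δ ∈ (0, 1), p ∈ (0, 1/2), p̄ = 1 - p, s = √(1 - 4δ²p p̄). Then [p̄ / ((1-δ)(1+s))] · (1 + (1 - 2δ²p)/s) ≥ [p̄(1 - pδ²)] / [(1-δ)(1 - 2p p̄ δ²)]. -/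
/-- The NSII expected gross social welfare weakly dominates the BHW baseline. -/
theorem nsii_gsw_ge_bhw (δ p : ℝ) (hδ0 : 0 < δ) (hδ1 : δ < 1)
    (hp : 0 < p) (hp' : p < 1/2)
    (s : ℝ) (hs : s = Real.sqrt (1 - 4 * δ^2 * p * (1 - p))) :
    ((1 - p) / ((1 - δ) * (1 + s))) * (1 + (1 - 2 * δ^2 * p) / s)
      ≥ ((1 - p) * (1 - p * δ^2)) / ((1 - δ) * (1 - 2 * p * (1 - p) * δ^2)) := by
  have hq : 0 < 1 - p := by linarith
  have hd : 0 < 1 - δ := by linarith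
  have hδ2 : δ^2 < 1 := by nlinarith
  have harg : 0 < 1 - 4 * δ^2 * p * (1 - p) := by nlinarith [sq_nonneg (1 - 2*p), mul_pos hp hq, sq_nonneg (δ*(1-2*p))]
  have hs0 : 0 < s := by rw [hs]; exact Real.sqrt_pos.mpr harg
  have hs1 : s ≤ 1 := by
    rw [hs]; exact Real.sqrt_le_one.mpr (by nlinarith [mul_pos hp hq, sq_nonneg δ])
  have hsq : s^2 = 1 - 4 * δ^2 * p * (1 - p) := by
    rw [hs]; exact Real.sq_sqrt harg.le
  have h1s : 0 < 1 + s := by linarith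
  have hA : 0 < 1 - 2 * p * (1 - p) * δ^2 := by nlinarith
  have hrw : ((1 - p) / ((1 - δ) * (1 + s))) * (1 + (1 - 2 * δ^2 * p) / s)
      = ((1 - p) * (s + (1 - 2 * δ^2 * p))) / ((1 - δ) * (1 + s) * s) := by
    field_simp

  rw [ge_iff_le, hrw, div_le_div_iff₀ (by positivity) (by positivity)]
  have hterm : 0 ≤ (1 - p) * (1 - δ) * (p * δ^2 * (1 - 2*p)) * (1 - s) := by
    have : 0 ≤ 1 - 2*p := by linarith
    have : 0 ≤ 1 - s := by linarith
    positivity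
  nlinarith [hterm, hsq, mul_pos (mul_pos hq hd) (by nlinarith : (0:ℝ) < 1 - p * δ^2)]
end
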